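/- Let G be a locally bounded Polish group. Then G is boundedly generated if and only if every ascending chain of open subgroups G_1 \le G_2 \le \cdots with union equal to G satisfies G_n = G for some n. -/

import Mathlib

/-!
An exhausting chain of subgroups `H₀ ≤ H₁ ≤ ⋯` turns `G ⧸ H₀` into a metric space with the
`G`-invariant ultrametric `d(aH₀, bH₀) = min {n | a⁻¹b ∈ Hₙ}`. It is discrete, so when `H₀` is open
`G` acts on it continuously by isometries; the orbit of `H₀` under a coarsely bounded generating
set is then bounded, so the set lies in some `Hₙ`, which must be all of `G`.

Conversely, if `U` is an open coarsely bounded neighbourhood of `1` and `(uᵢ)` is dense, the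
open subgroups `⟨U ∪ {uᵢ | i < n}⟩` exhaust `G`, because every `g` lies in some `uᵢ U`. Hence one of
them is `G`, and `U ∪ {uᵢ | i < n}` is a coarsely bounded generating set.
-/
open Pointwise

/-- A subset `A` of a topological group `G` is coarsely bounded in `G` if every orbit of
`A` under every continuous isometric action of `G` on a metric space is bounded. -/
def CoarselyBounded (G : Type) [Group G] [TopologicalSpace G] (A : Set G) : Prop :=
  ∀ (X : Type) [MetricSpace X] [MulAction G X],
    Continuous (fun p : G × X => p.1 • p.2) →
    (∀ g : G, Isometry (fun x : X => g • x)) →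
    ∀ x : X, Bornology.IsBounded ((fun g => g • x) '' A)

structure SubgroupChain (G : Type*) [Group G] where
  subgroup : ℕ → Subgroup G
  monotone : Monotone subgroup
  iUnion_eq_univ : ⋃ n, (subgroup n : Set G) = Set.univ

namespace SubgroupChain

variable {G : Type*} [Group G] (C : SubgroupChain G)

noncomputable def level (g : G) : ℕ := sInf {n | g ∈ C.subgroup n}

lemma mem_subgroup_level (g : G) : g ∈ C.subgroup (C.level g) := by
  have hg : g ∈ ⋃ n, (C.subgroup n : Set G) := C.iUnion_eq_univ ▸ Set.mem_univ g
  exact Nat.sInf_mem (Set.mem_iUnion.mp hg)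

lemma level_le_iff {g : G} {n : ℕ} : C.level g ≤ n ↔ g ∈ C.subgroup n :=
  ⟨fun h => C.monotone h (C.mem_subgroup_level g), fun h => Nat.sInf_le h⟩

lemma level_eq_zero_iff {g : G} : C.level g = 0 ↔ g ∈ C.subgroup 0 := by
  rw [← C.level_le_iff, Nat.le_zero]

lemma level_inv (g : G) : C.level g⁻¹ = C.level g := by
  simp only [level, inv_mem_iff]

lemma level_mul_le (g h : G) : C.level (g * h) ≤ max (C.level g) (C.level h) :=
  C.level_le_iff.mpr <| mul_mem
    (C.level_le_iff.mp (le_max_left _ _)) (C.level_le_iff.mp (le_max_right _ _))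

lemma level_mul_mul_of_mem {h k : G} (hh : h ∈ C.subgroup 0) (hk : k ∈ C.subgroup 0) (g : G) :
    C.level (h * g * k) = C.level g := by
  have hH : ∀ n, h ∈ C.subgroup n := fun n => C.monotone n.zero_le hh
  have hK : ∀ n, k ∈ C.subgroup n := fun n => C.monotone n.zero_le hk
  simp only [level, Subgroup.mul_mem_cancel_right _ (hK _), Subgroup.mul_mem_cancel_left _ (hH _)]

/-- A type synonym for `G ⧸ C.subgroup 0`, so that it carries the metric
`dist (a H₀) (b H₀) = C.level (a⁻¹ * b)` rather than the quotient topology. -/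
def Cosets : Type _ := G ⧸ C.subgroup 0

namespace Cosets

variable {C}

instance : MulAction G C.Cosets := inferInstanceAs (MulAction G (G ⧸ C.subgroup 0))

def mk (a : G) : C.Cosets := QuotientGroup.mk a

lemma mk_surjective : Function.Surjective (mk : G → C.Cosets) :=
  QuotientGroup.mk_surjective

lemma mk_eq_mk {a b : G} : (mk a : C.Cosets) = mk b ↔ a⁻¹ * b ∈ C.subgroup 0 :=
  QuotientGroup.eq

lemma smul_mk (g a : G) : g • (mk a : C.Cosets) = mk (g * a) := rfl

noncomputable instance : MetricSpace C.Cosets where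
  dist := Quotient.lift₂ (s₁ := QuotientGroup.leftRel _) (s₂ := QuotientGroup.leftRel _)
    (fun a b : G => (C.level (a⁻¹ * b) : ℝ)) fun a₁ b₁ a₂ b₂ ha hb => by
      replace ha := QuotientGroup.leftRel_apply.mp ha
      replace hb := QuotientGroup.leftRel_apply.mp hb
      have : a₂⁻¹ * b₂ = (a₁⁻¹ * a₂)⁻¹ * (a₁⁻¹ * b₁) * (b₁⁻¹ * b₂) := by group
      rw [this, C.level_mul_mul_of_mem (inv_mem ha) hb]
  dist_self x := by
    obtain ⟨a, rfl⟩ := mk_surjective x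
    show (C.level (a⁻¹ * a) : ℝ) = 0
    simp [C.level_eq_zero_iff]
  dist_comm x y := by
    obtain ⟨a, rfl⟩ := mk_surjective x
    obtain ⟨b, rfl⟩ := mk_surjective y
    show (C.level (a⁻¹ * b) : ℝ) = C.level (b⁻¹ * a)
    rw [← C.level_inv, mul_inv_rev, inv_inv]
  dist_triangle x y z := by
    obtain ⟨a, rfl⟩ := mk_surjective x
    obtain ⟨b, rfl⟩ := mk_surjective y
    obtain ⟨c, rfl⟩ := mk_surjective z
    calc (C.level (a⁻¹ * c) : ℝ)
        ≤ (max (C.level (a⁻¹ * b)) (C.level (b⁻¹ * c)) : ℕ) := by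
          exact_mod_cast (by simpa [mul_assoc] using C.level_mul_le (a⁻¹ * b) (b⁻¹ * c))
      _ ≤ C.level (a⁻¹ * b) + C.level (b⁻¹ * c) := by
          push_cast; exact max_le_add_of_nonneg (Nat.cast_nonneg _) (Nat.cast_nonneg _)
  eq_of_dist_eq_zero {x y} h := by
    obtain ⟨a, rfl⟩ := mk_surjective x
    obtain ⟨b, rfl⟩ := mk_surjective y
    exact mk_eq_mk.mpr (C.level_eq_zero_iff.mp (Nat.cast_eq_zero.mp h))

lemma dist_mk (a b : G) : dist (mk a : C.Cosets) (mk b) = C.level (a⁻¹ * b) := rfl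

lemma isometry_smul (g : G) : Isometry (fun x : C.Cosets => g • x) := by
  refine Isometry.of_dist_eq fun x y => ?_
  obtain ⟨a, rfl⟩ := mk_surjective x
  obtain ⟨b, rfl⟩ := mk_surjective y
  simp only [smul_mk, dist_mk, mul_inv_rev, mul_assoc, inv_mul_cancel_left]

instance : DiscreteTopology C.Cosets := by
  refine DiscreteTopology.of_forall_le_dist one_pos fun x y hxy => ?_
  obtain ⟨a, rfl⟩ := mk_surjective x
  obtain ⟨b, rfl⟩ := mk_surjective y
  rw [dist_mk, Nat.one_le_cast, Nat.one_le_iff_ne_zero, Ne, C.level_eq_zero_iff]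
  exact fun h => hxy (mk_eq_mk.mpr h)

lemma continuous_smul [TopologicalSpace G] [IsTopologicalGroup G]
    (hopen : IsOpen (C.subgroup 0 : Set G)) :
    Continuous (fun p : G × C.Cosets => p.1 • p.2) := by
  refine continuous_prod_of_discrete_right.mpr fun x => continuous_discrete_rng.mpr fun y => ?_
  obtain ⟨a, rfl⟩ := mk_surjective x
  obtain ⟨b, rfl⟩ := mk_surjective y
  have : (fun g : G => g • (mk a : C.Cosets)) ⁻¹' {mk b} =
      (fun g => (g * a)⁻¹ * b) ⁻¹' (C.subgroup 0 : Set G) := by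
    ext g
    simp [smul_mk, mk_eq_mk]
  exact this ▸ hopen.preimage (by fun_prop)

end Cosets

end SubgroupChain

section CoarselyBounded

variable {G : Type} [Group G] [TopologicalSpace G]

lemma CoarselyBounded.union {A B : Set G} (hA : CoarselyBounded G A) (hB : CoarselyBounded G B) :
    CoarselyBounded G (A ∪ B) := fun X _ _ hc hi x => by
  rw [Set.image_union]
  exact (hA X hc hi x).union (hB X hc hi x)

lemma Set.Finite.coarselyBounded {A : Set G} (hA : A.Finite) : CoarselyBounded G A :=
  fun _ _ _ _ _ _ => (hA.image _).isBounded

lemma SubgroupChain.exists_subset_of_coarselyBounded [IsTopologicalGroup G] (C : SubgroupChain G)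
    (hopen : IsOpen (C.subgroup 0 : Set G)) {S : Set G} (hS : CoarselyBounded G S) :
    ∃ n, S ⊆ C.subgroup n := by
  obtain ⟨r, hr⟩ := (hS C.Cosets (Cosets.continuous_smul hopen) Cosets.isometry_smul
    (Cosets.mk 1)).subset_closedBall (Cosets.mk 1)
  refine ⟨⌈r⌉₊, fun s hs => C.level_le_iff.mp ?_⟩
  have hs : dist (s • (Cosets.mk 1 : C.Cosets)) (Cosets.mk 1) ≤ r := hr ⟨s, hs, rfl⟩
  rw [dist_comm, Cosets.smul_mk, Cosets.dist_mk, inv_one, one_mul, mul_one] at hs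
  exact_mod_cast hs.trans (Nat.le_ceil r)

lemma SubgroupChain.exists_eq_top_of_closure_eq_top [IsTopologicalGroup G] (C : SubgroupChain G)
    (hopen : IsOpen (C.subgroup 0 : Set G)) {S : Set G} (hS : CoarselyBounded G S)
    (hgen : Subgroup.closure S = ⊤) : ∃ n, C.subgroup n = ⊤ := by
  obtain ⟨n, hn⟩ := C.exists_subset_of_coarselyBounded hopen hS
  exact ⟨n, top_le_iff.mp (hgen ▸ (Subgroup.closure_le _).mpr hn)⟩

end CoarselyBounded

section ClosureUnionPrefix

variable {G : Type*} [Group G]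

def closureUnionPrefix (U : Set G) (u : ℕ → G) (n : ℕ) : Subgroup G :=
  Subgroup.closure (U ∪ u '' Set.Iio n)

lemma closureUnionPrefix_monotone {U : Set G} {u : ℕ → G} : Monotone (closureUnionPrefix U u) :=
  fun _ _ hmn =>
    Subgroup.closure_mono (Set.union_subset_union_right _ (Set.image_mono (Set.Iio_subset_Iio hmn)))

variable [TopologicalSpace G] [IsTopologicalGroup G]

lemma DenseRange.exists_inv_mul_mem {ι : Type*} {u : ι → G} (hu : DenseRange u) {U : Set G}
    (hU : IsOpen U) (h1 : (1 : G) ∈ U) (g : G) : ∃ i, (u i)⁻¹ * g ∈ U :=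
  hu.exists_mem_open (hU.preimage (by fun_prop : Continuous fun x : G => x⁻¹ * g))
    ⟨g, by simpa using h1⟩

variable {U : Set G} {u : ℕ → G}

lemma isOpen_closureUnionPrefix (hU : IsOpen U) (h1 : (1 : G) ∈ U) (n : ℕ) :
    IsOpen (closureUnionPrefix U u n : Set G) :=
  Subgroup.isOpen_of_mem_nhds _ (Filter.mem_of_superset (hU.mem_nhds h1)
    (Set.subset_union_left.trans Subgroup.subset_closure))

lemma iUnion_closureUnionPrefix (hu : DenseRange u) (hU : IsOpen U) (h1 : (1 : G) ∈ U) :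
    ⋃ n, (closureUnionPrefix U u n : Set G) = Set.univ := by
  refine Set.eq_univ_of_forall fun g => ?_
  obtain ⟨i, hi⟩ := hu.exists_inv_mul_mem hU h1 g
  have hui : u i ∈ closureUnionPrefix U u (i + 1) :=
    Subgroup.subset_closure (Or.inr ⟨i, Nat.lt_succ_self i, rfl⟩)
  exact Set.mem_iUnion.mpr ⟨i + 1, by
    simpa using mul_mem hui (Subgroup.subset_closure (Or.inl hi))⟩

end ClosureUnionPrefix

/-- A locally bounded Polish group is boundedly generated iff every ascending exhausting
chain of open subgroups terminates at `G` after finitely many steps. -/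
theorem stmt9 {G : Type} [Group G] [TopologicalSpace G] [IsTopologicalGroup G]
    [PolishSpace G]
    (hlb : ∃ U : Set G, IsOpen U ∧ (1 : G) ∈ U ∧ CoarselyBounded G U) :
    (∃ S : Set G, CoarselyBounded G S ∧ Subgroup.closure S = ⊤) ↔
      (∀ H : ℕ → Subgroup G, (∀ n, IsOpen (H n : Set G)) → Monotone H →
        (⋃ n, (H n : Set G)) = Set.univ → ∃ n, H n = ⊤) := by
  constructor
  · rintro ⟨S, hS, hgen⟩ H hopen hmono hexh
    exact SubgroupChain.exists_eq_top_of_closure_eq_top ⟨H, hmono, hexh⟩ (hopen 0) hS hgen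
  · intro hchain
    obtain ⟨U, hUo, hU1, hUcb⟩ := hlb
    have hu := TopologicalSpace.denseRange_denseSeq G
    obtain ⟨n, hn⟩ := hchain _ (isOpen_closureUnionPrefix hUo hU1) closureUnionPrefix_monotone
      (iUnion_closureUnionPrefix hu hUo hU1)
    exact ⟨_, hUcb.union ((Set.finite_Iio n).image _).coarselyBounded, hn⟩
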